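/- Let σ be a singular cardinal of countable cofinality, ⟨σ_n : n < ω⟩ an increasing sequence of regular cardinals cofinal in σ, and ⟨f_α : α < σ⁺⟩ a scale in ∏_n σ_n. If σ⁺ ∈ I[σ⁺] (the approachability property holds at σ⁺), then there is a club C ⊆ σ⁺ such that every γ ∈ C of uncountable cofinality is a good point for the scale. -/

import Mathlib

/-!
Let `⟨a α⟩` and `C₀` witness `σ⁺ ∈ I[σ⁺]`. If `a α` has fewer than `σ_n` elements, the `n`-th
coordinates of `f ζ`, `ζ ∈ a α`, are bounded below the regular `σ_n`, so a single `f (H α)`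
eventually dominates all of them. Let `C` be the closure points of `H` in `C₀`. For `γ ∈ C` of
uncountable cofinality, approached by `A` of order type `cf γ < σ`, every initial segment
`A ∩ ξ = a α` (`α < γ`) is therefore dominated, from some coordinate `t ξ` on, by some `f (d ξ)`
with `ξ ≤ d ξ < γ`. As `cf γ > ω`, one bound `m` on `t ξ` serves unboundedly many `ξ ∈ A`;
thinning these so that consecutive ones are separated by a point of `A` lying above `d ξ`, the
`d ξ` form an unbounded subset of `γ` along which every coordinate `n ≥ m` strictly increases.
-/

/-- The order type of a set of ordinals. -/
noncomputable def otype (A : Set Ordinal.{0}) : Ordinal.{1} :=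
  @Ordinal.type A (Subrel ((· < ·) : Ordinal → Ordinal → Prop) A)
    (Subrel.instIsWellOrderSubtype _ A)

/-- `C` is a club (closed unbounded) subset of the ordinal `τ`. -/
def IsClubIn (C : Set Ordinal.{0}) (τ : Ordinal.{0}) : Prop :=
  C ⊆ Set.Iio τ ∧ (∀ β < τ, ∃ ξ ∈ C, β < ξ) ∧
    ∀ γ < τ, 0 < γ → (∀ β < γ, ∃ ξ ∈ C, β < ξ ∧ ξ < γ) → γ ∈ C

/-- `γ` is approachable with respect to the sequence `⟨a α : α⟩`: there is an
unbounded `A ⊆ γ` of order type `cf γ` all of whose proper initial segments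
occur as some `a α` with `α < γ`. -/
def ApproachableWrt (a : Ordinal.{0} → Set Ordinal.{0}) (γ : Ordinal.{0}) : Prop :=
  ∃ A : Set Ordinal, A ⊆ Set.Iio γ ∧ (∀ β < γ, ∃ ξ ∈ A, β ≤ ξ) ∧
    otype A = Ordinal.lift.{1} (Ordinal.cof γ).ord ∧
    ∀ β < γ, ∃ α < γ, A ∩ Set.Iio β = a α

/-- `a` is a `τ`-sequence of bounded subsets of `τ`. -/
def BddSubsetSeq (a : Ordinal.{0} → Set Ordinal.{0}) (τ : Ordinal.{0}) : Prop :=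
  ∀ α < τ, ∃ β < τ, a α ⊆ Set.Iio β

/-- `S` belongs to the approachability ideal `I[τ]`. -/
def InApprIdeal (S : Set Ordinal.{0}) (τ : Ordinal.{0}) : Prop :=
  ∃ a : Ordinal → Set Ordinal, BddSubsetSeq a τ ∧
    ∃ C : Set Ordinal, IsClubIn C τ ∧ ∀ γ ∈ S ∩ C, ApproachableWrt a γ

/-- `⟨f α : α < σ⁺⟩` is a scale of length `σ⁺` in `∏ n, σs n`, where `σs` is an
increasing sequence of regular cardinals cofinal in `σ`: the sequence is
increasing and cofinal in the eventual domination ordering. -/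
def IsScale (σ : Cardinal.{0}) (σs : ℕ → Cardinal.{0})
    (f : Ordinal.{0} → ℕ → Ordinal.{0}) : Prop :=
  (∀ n, (σs n).IsRegular) ∧ StrictMono σs ∧ (∀ n, σs n < σ) ∧
  (∀ c < σ, ∃ n, c < σs n) ∧
  (∀ α < (Order.succ σ).ord, ∀ n, f α n < (σs n).ord) ∧
  (∀ α β : Ordinal, α < β → β < (Order.succ σ).ord →
    ∃ N : ℕ, ∀ n ≥ N, f α n < f β n) ∧
  (∀ g : ℕ → Ordinal, (∀ n, g n < (σs n).ord) →
    ∃ α < (Order.succ σ).ord, ∃ N : ℕ, ∀ n ≥ N, g n < f α n)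

/-- `γ` is a good point for the scale `f`: there are an unbounded `A ⊆ γ` and
`N < ω` such that `⟨f α n : α ∈ A⟩` is strictly increasing for all `n ≥ N`. -/
def GoodPoint (f : Ordinal.{0} → ℕ → Ordinal.{0}) (γ : Ordinal.{0}) : Prop :=
  ∃ A : Set Ordinal, A ⊆ Set.Iio γ ∧ (∀ β < γ, ∃ ξ ∈ A, β ≤ ξ) ∧
    ∃ N : ℕ, ∀ n ≥ N, ∀ α ∈ A, ∀ β ∈ A, α < β → f α n < f β n

open Ordinal Cardinal Set Order

theorem Ordinal.exists_closure_point_above {γ : Ordinal.{0}} (hγ : ℵ₀ < γ.cof)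
    {B : Set Ordinal} (hB : ∀ x < γ, #↑(B ∩ Iio x) < Cardinal.lift.{1} γ.cof)
    {p : Ordinal → Ordinal} (hp : ∀ ξ ∈ B, p ξ < γ) {β : Ordinal} (hβ : β < γ) :
    ∃ η < γ, β < η ∧ ∀ ξ ∈ B, ξ < η → p ξ < η := by
  have hγlim : IsSuccLimit γ := one_lt_cof_iff.1 (one_lt_aleph0.trans hγ)
  have hbdd : ∀ x, BddAbove (p '' (B ∩ Iio x)) := fun x =>
    ⟨γ, by rintro _ ⟨ξ, hξ, rfl⟩; exact (hp ξ hξ.1).le⟩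
  set G : Ordinal → Ordinal := fun x => succ (sSup (p '' (B ∩ Iio x)))
  have hG : ∀ x < γ, G x < γ := fun x hx => hγlim.succ_lt <| sSup_lt_of_lt_cof
    (by rw [← lift_cof]; exact mk_image_le.trans_lt (hB x hx))
    (by rintro _ ⟨ξ, hξ, rfl⟩; exact hp ξ hξ.1)
  refine ⟨nfp G (succ β), nfp_lt_ord hγ hG (hγlim.succ_lt hβ),
    (lt_succ β).trans_le (le_nfp _ _), fun ξ hξB hξη => ?_⟩
  obtain ⟨n, hn⟩ := lt_nfp_iff.1 hξη
  calc p ξ ≤ sSup (p '' (B ∩ Iio (G^[n] (succ β)))) := le_csSup (hbdd _) ⟨ξ, ⟨hξB, hn⟩, rfl⟩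
    _ < G^[n + 1] (succ β) := by rw [Function.iterate_succ_apply']; exact lt_succ _
    _ ≤ nfp G (succ β) := iterate_le_nfp _ _ _

theorem isClubIn_setOf_forall_lt {κ : Cardinal.{0}} (hκ : κ.IsRegular) (hκ₀ : ℵ₀ < κ)
    {H : Ordinal → Ordinal} (hH : ∀ α < κ.ord, H α < κ.ord) :
    IsClubIn {γ | γ < κ.ord ∧ ∀ α < γ, H α < γ} κ.ord := by
  refine ⟨fun γ hγ => hγ.1, fun β hβ => ?_, fun γ hγ _ hcl => ⟨hγ, fun α hα => ?_⟩⟩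
  · have hsmall : ∀ x < κ.ord, #↑(Iio κ.ord ∩ Iio x) < Cardinal.lift.{1} κ.ord.cof := by
      intro x hx
      rw [hκ.cof_ord]
      exact (mk_le_mk_of_subset inter_subset_right).trans_lt
        (by rw [Cardinal.mk_Iio_ordinal, Cardinal.lift_lt]; exact lt_ord.1 hx)
    obtain ⟨η, hη, hβη, hclosed⟩ :=
      exists_closure_point_above (by rwa [hκ.cof_ord]) hsmall hH hβ
    exact ⟨η, ⟨hη, fun α hα => hclosed α (hα.trans hη) hα⟩, hβη⟩
  · obtain ⟨ξ, hξ, hαξ, hξγ⟩ := hcl α hα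
    exact (hξ.2 α hαξ).trans hξγ

theorem IsClubIn.inter {τ : Ordinal.{0}} (hτ : ℵ₀ < τ.cof) {C D : Set Ordinal}
    (hC : IsClubIn C τ) (hD : IsClubIn D τ) : IsClubIn (C ∩ D) τ := by
  obtain ⟨hCτ, hCunb, hCcl⟩ := hC
  obtain ⟨hDτ, hDunb, hDcl⟩ := hD
  choose! c hcC hc using hCunb
  choose! d hdD hd using hDunb
  have hdc : ∀ x < τ, d (c x) < τ := fun x hx => hDτ (hdD _ (hCτ (hcC x hx)))
  refine ⟨fun x hx => hCτ hx.1, fun β hβ => ?_, fun γ hγ hγ₀ hcl => ⟨?_, ?_⟩⟩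
  · set η := nfp (d ∘ c) β
    have hητ : η < τ := nfp_lt_ord hτ hdc hβ
    have hstep : ∀ n, (d ∘ c)^[n] β < c ((d ∘ c)^[n] β) ∧ c ((d ∘ c)^[n] β) < (d ∘ c)^[n + 1] β ∧
        (d ∘ c)^[n + 1] β < η := by
      intro n
      have hlt : ∀ m, (d ∘ c)^[m] β < τ := fun m => (iterate_le_nfp _ _ m).trans_lt hητ
      have hcd : ∀ m, c ((d ∘ c)^[m] β) < (d ∘ c)^[m + 1] β := fun m => by
        rw [Function.iterate_succ_apply']
        exact hd _ (hCτ (hcC _ (hlt m)))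
      exact ⟨hc _ (hlt n), hcd n, (hc _ (hlt (n + 1))).trans
        ((hcd (n + 1)).trans_le (iterate_le_nfp _ _ _))⟩
    have hβη : β < η := (hstep 0).1.trans ((hstep 0).2.1.trans (hstep 0).2.2)
    have hη₀ : 0 < η := pos_of_gt hβη
    refine ⟨η, ⟨hCcl η hητ hη₀ fun x hx => ?_, hDcl η hητ hη₀ fun x hx => ?_⟩, hβη⟩
    all_goals obtain ⟨n, hn⟩ := lt_nfp_iff.1 hx; obtain ⟨h₁, h₂, h₃⟩ := hstep n
    · exact ⟨_, hcC _ ((iterate_le_nfp _ _ n).trans_lt hητ), hn.trans h₁, h₂.trans h₃⟩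
    · refine ⟨_, ?_, hn.trans (h₁.trans h₂), h₃⟩
      rw [Function.iterate_succ_apply']
      exact hdD _ (hCτ (hcC _ ((iterate_le_nfp _ _ n).trans_lt hητ)))
  · exact hCcl γ hγ hγ₀ fun β hβ => (hcl β hβ).imp fun ξ h => ⟨h.1.1, h.2⟩
  · exact hDcl γ hγ hγ₀ fun β hβ => (hcl β hβ).imp fun ξ h => ⟨h.1.2, h.2⟩

theorem exists_unbounded_sublevel {γ : Ordinal.{0}} (hγ : ℵ₀ < γ.cof) {A : Set Ordinal}
    (hA : ∀ β < γ, ∃ ξ ∈ A, β ≤ ξ) (F : Ordinal → ℕ) :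
    ∃ m, ∀ β < γ, ∃ ξ ∈ A, β ≤ ξ ∧ F ξ ≤ m := by
  by_contra! h
  choose b hbγ hb using h
  obtain ⟨ξ, hξA, hξ⟩ := hA _ (iSup_lt_of_lt_cof (by simpa using hγ) hbγ)
  exact (hb (F ξ) ξ hξA ((le_ciSup Ordinal.bddAbove_of_small (F ξ)).trans hξ)).false

theorem mk_inter_Iio_lt_cof_of_otype_eq {γ : Ordinal.{0}} {A : Set Ordinal}
    (hA : ∀ β < γ, ∃ ξ ∈ A, β ≤ ξ) (hotype : otype A = Ordinal.lift.{1} γ.cof.ord)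
    {x : Ordinal} (hx : x < γ) : #↑(A ∩ Iio x) < Cardinal.lift.{1} γ.cof := by
  obtain ⟨ξ, hξA, hxξ⟩ := hA x hx
  have : IsWellOrder (Subtype A) (Subrel ((· < ·) : Ordinal → Ordinal → Prop) A) :=
    Subrel.instIsWellOrderSubtype _ A
  have hξ : (typein (Subrel ((· < ·) : Ordinal → Ordinal → Prop) A) ⟨ξ, hξA⟩).card <
      Cardinal.lift.{1} γ.cof := by
    rw [← lt_ord, ← lift_ord, ← hotype]
    exact typein_lt_type _ _
  rw [card_typein] at hξ
  refine (mk_le_of_injective (f := fun z : ↑(A ∩ Iio x) =>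
    (⟨⟨z, z.2.1⟩, z.2.2.trans_le hxξ⟩ : {y : A // (y : Ordinal) < ξ})) ?_).trans_lt hξ
  intro z w h
  simpa [Subtype.ext_iff] using h

theorem cof_lt_of_lt_ord_succ {σ : Cardinal.{0}} (hσ : σ.ord.cof < σ) {γ : Ordinal.{0}}
    (hγ : IsSuccLimit γ) (hγσ : γ < (succ σ).ord) : γ.cof < σ := by
  refine ((cof_le_card γ).trans (le_of_lt_succ (lt_ord.1 hγσ))).lt_of_ne fun h => ?_
  have hreg := isRegular_cof hγ
  rw [h] at hreg
  exact hσ.ne hreg.cof_ord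

theorem IsScale.exists_eventually_dominating {σ : Cardinal.{0}} {σs : ℕ → Cardinal.{0}}
    {f : Ordinal → ℕ → Ordinal} (hf : IsScale σ σs f) {S : Set Ordinal}
    (hS : S ⊆ Iio (succ σ).ord) : ∃ δ < (succ σ).ord, ∃ M, ∀ n ≥ M,
      #S < Cardinal.lift.{1} (σs n) → ∀ ζ ∈ S, f ζ n < f δ n := by
  classical
  obtain ⟨hreg, -, -, -, hbd, -, hcofinal⟩ := hf
  -- regularity of `σs n` keeps this supremum below `σs n` whenever `S` is small; `0` is filler
  set g : ℕ → Ordinal := fun n =>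
    if #S < Cardinal.lift.{1} (σs n) then sSup ((· + 1) '' ((f · n) '' S)) else 0
  have hg : ∀ n, g n < (σs n).ord := by
    intro n
    by_cases hn : #S < Cardinal.lift.{1} (σs n)
    · simp only [g, if_pos hn]
      refine sSup_add_one_lt_of_lt_cof ?_ ?_
      · rw [← lift_cof, (hreg n).cof_ord]
        exact mk_image_le.trans_lt hn
      · rintro _ ⟨ζ, hζ, rfl⟩
        exact hbd ζ (hS hζ) n
    · simp only [g, if_neg hn]
      exact ord_pos.2 (hreg n).pos
  obtain ⟨δ, hδ, M, hM⟩ := hcofinal g hg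
  refine ⟨δ, hδ, M, fun n hn hSn ζ hζ => ?_⟩
  have hbdd : BddAbove ((· + 1) '' ((f · n) '' S)) :=
    ⟨(σs n).ord, by rintro _ ⟨_, ⟨ζ, hζ, rfl⟩, rfl⟩; exact add_one_le_of_lt (hbd ζ (hS hζ) n)⟩
  calc f ζ n < f ζ n + 1 := lt_add_one _
    _ ≤ g n := by simp only [g, if_pos hSn]; exact le_csSup hbdd ⟨_, ⟨ζ, hζ, rfl⟩, rfl⟩
    _ < f δ n := hM n hn

theorem exists_unbounded_separated {γ : Ordinal.{0}} (hγ : ℵ₀ < γ.cof) {B : Set Ordinal}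
    (hBunb : ∀ β < γ, ∃ ξ ∈ B, β ≤ ξ)
    (hBsmall : ∀ x < γ, #↑(B ∩ Iio x) < Cardinal.lift.{1} γ.cof)
    {p : Ordinal → Ordinal} (hp : ∀ ξ ∈ B, p ξ < γ) :
    ∃ D ⊆ B, (∀ β < γ, ∃ ξ ∈ D, β ≤ ξ) ∧ ∀ ξ ∈ D, ∀ ξ' ∈ D, ξ < ξ' → p ξ < ξ' := by
  refine ⟨{ξ ∈ B | ∀ ξ' ∈ B, ξ' < ξ → p ξ' < ξ}, sep_subset _ _, fun β hβ => ?_,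
    fun ξ hξ ξ' hξ' h => hξ'.2 ξ hξ.1 h⟩
  obtain ⟨η, hηγ, hβη, hη⟩ := exists_closure_point_above hγ hBsmall hp hβ
  -- the least point of `B` above a closure point `η` of `p` is separated from all earlier ones
  have hne : (B ∩ Ici η).Nonempty := (hBunb η hηγ).imp fun _ h => h
  set ξ := sInf (B ∩ Ici η)
  have hξ : ξ ∈ B ∩ Ici η := csInf_mem hne
  refine ⟨ξ, ⟨hξ.1, fun ξ' hξ'B hξ'ξ => ?_⟩, hβη.le.trans hξ.2⟩
  have hξ'η : ξ' < η := not_le.1 fun h => hξ'ξ.not_ge (csInf_le' ⟨hξ'B, h⟩)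
  exact (hη ξ' hξ'B hξ'η).trans_le hξ.2

theorem exists_ge_eventually_dominating {f : Ordinal → ℕ → Ordinal} {γ : Ordinal.{0}}
    (hγ : IsSuccLimit γ) (hinc : ∀ α β, α < β → β < γ → ∃ N, ∀ n ≥ N, f α n < f β n)
    {S : Set Ordinal} {δ ξ : Ordinal} (hδ : δ < γ) (hξ : ξ < γ)
    (hdom : ∃ N, ∀ n ≥ N, ∀ ζ ∈ S, f ζ n < f δ n) :
    ∃ δ' < γ, ξ ≤ δ' ∧ ∃ N, ∀ n ≥ N, ∀ ζ ∈ S, f ζ n < f δ' n := by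
  obtain ⟨N, hN⟩ := hdom
  have hδ' : succ (max δ ξ) < γ := hγ.succ_lt (max_lt hδ hξ)
  obtain ⟨N', hN'⟩ := hinc _ _ ((le_max_left _ _).trans_lt (lt_succ _)) hδ'
  refine ⟨_, hδ', (le_max_right _ _).trans (le_succ _), max N N', fun n hn ζ hζ => ?_⟩
  exact (hN n (le_of_max_le_left hn) ζ hζ).trans (hN' n (le_of_max_le_right hn))

theorem goodPoint_of_forall_exists_dominating {f : Ordinal → ℕ → Ordinal} {γ : Ordinal.{0}}
    (hγ : ℵ₀ < γ.cof) {A : Set Ordinal} (hAγ : A ⊆ Iio γ) (hAunb : ∀ β < γ, ∃ ξ ∈ A, β ≤ ξ)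
    (hAsmall : ∀ x < γ, #↑(A ∩ Iio x) < Cardinal.lift.{1} γ.cof)
    (hinc : ∀ α β, α < β → β < γ → ∃ N, ∀ n ≥ N, f α n < f β n)
    (hdom : ∀ ξ < γ, ∃ δ < γ, ∃ N, ∀ n ≥ N, ∀ ζ ∈ A ∩ Iio ξ, f ζ n < f δ n) :
    GoodPoint f γ := by
  have hγlim : IsSuccLimit γ := one_lt_cof_iff.1 (one_lt_aleph0.trans hγ)
  have hdom' := fun ξ hξ =>
    have ⟨_, hδ, hN⟩ := hdom ξ hξ; exists_ge_eventually_dominating hγlim hinc hδ hξ hN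
  choose! d hdγ hξd t ht using hdom'
  have hp : ∀ ξ < γ, ∃ π ∈ A, d ξ < π := fun ξ hξ =>
    (hAunb _ (hγlim.succ_lt (hdγ ξ hξ))).imp fun _ h => ⟨h.1, (lt_succ _).trans_le h.2⟩
  choose! p hpA hdp using hp
  have hs : ∀ ξ < γ, ∃ N, ∀ n ≥ N, f (d ξ) n < f (p ξ) n := fun ξ hξ =>
    hinc _ _ (hdp ξ hξ) (hAγ (hpA ξ hξ))
  choose! s hs using hs
  obtain ⟨m, hm⟩ := exists_unbounded_sublevel hγ hAunb fun ξ => max (t ξ) (s ξ)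
  obtain ⟨D, hDsub, hDunb, hDsep⟩ :=
    exists_unbounded_separated (B := {ξ ∈ A | max (t ξ) (s ξ) ≤ m}) (p := p) hγ
      (fun β hβ => (hm β hβ).imp fun _ h => ⟨⟨h.1, h.2.2⟩, h.2.1⟩)
      (fun x hx => (mk_le_mk_of_subset (inter_subset_inter_left _ (sep_subset _ _))).trans_lt
        (hAsmall x hx))
      (fun ξ hξ => hAγ (hpA ξ (hAγ hξ.1)))
  have hDγ : ∀ ξ ∈ D, ξ < γ := fun ξ hξ => hAγ (hDsub hξ).1
  have hdD : StrictMonoOn d D := fun ξ hξ ξ' hξ' h =>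
    (hdp ξ (hDγ ξ hξ)).trans ((hDsep ξ hξ ξ' hξ' h).trans_le (hξd ξ' (hDγ ξ' hξ')))
  refine ⟨d '' D, ?_, fun β hβ => ?_, m, ?_⟩
  · rintro _ ⟨ξ, hξ, rfl⟩
    exact hdγ ξ (hDγ ξ hξ)
  · obtain ⟨ξ, hξD, hβξ⟩ := hDunb β hβ
    exact ⟨d ξ, mem_image_of_mem d hξD, hβξ.trans (hξd ξ (hDγ ξ hξD))⟩
  · rintro n hn _ ⟨ξ, hξ, rfl⟩ _ ⟨ξ', hξ', rfl⟩ hlt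
    have hξξ' : ξ < ξ' := (hdD.lt_iff_lt hξ hξ').1 hlt
    have hmξ := (hDsub hξ).2
    have hmξ' := (hDsub hξ').2
    calc f (d ξ) n < f (p ξ) n := hs ξ (hDγ ξ hξ) n (by omega)
      _ < f (d ξ') n :=
        ht ξ' (hDγ ξ' hξ') n (by omega) (p ξ) ⟨hpA ξ (hDγ ξ hξ), hDsep ξ hξ ξ' hξ' hξξ'⟩

/-- Let `σ` be a singular cardinal of countable cofinality, `σs` an increasing
sequence of regular cardinals cofinal in `σ`, and `f` a scale of length `σ⁺`
in `∏ n, σs n`.  If the approachability property holds at `σ⁺`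
(`σ⁺ ∈ I[σ⁺]`), then there is a club `C ⊆ σ⁺` such that every `γ ∈ C` of
uncountable cofinality is a good point for the scale. -/
theorem approachability_implies_good_scale (σ : Cardinal.{0})
    (hσ : Cardinal.aleph0 < σ) (hcof : σ.ord.cof = Cardinal.aleph0)
    (σs : ℕ → Cardinal) (f : Ordinal → ℕ → Ordinal)
    (hscale : IsScale σ σs f)
    (happr : InApprIdeal (Set.Iio (Order.succ σ).ord) (Order.succ σ).ord) :
    ∃ C : Set Ordinal, IsClubIn C (Order.succ σ).ord ∧
      ∀ γ ∈ C, Cardinal.aleph0 < γ.cof → GoodPoint f γ := by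
  obtain ⟨a, -, C₀, hC₀, happroach⟩ := happr
  have hreg : (succ σ).IsRegular := isRegular_succ hσ.le
  have hσ' : ℵ₀ < succ σ := hσ.trans (lt_succ σ)
  choose H hH M hM using fun α =>
    hscale.exists_eventually_dominating (S := a α ∩ Iio (succ σ).ord) inter_subset_right
  obtain ⟨-, hσs, -, hσs_cofinal, -, hinc, -⟩ := hscale
  refine ⟨_, (isClubIn_setOf_forall_lt hreg hσ' fun α _ => hH α).inter
    (by rwa [hreg.cof_ord]) hC₀, ?_⟩
  rintro γ ⟨⟨hγτ, hHγ⟩, hγC₀⟩ hγ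
  obtain ⟨A, hAγ, hAunb, hAotype, hAcode⟩ := happroach γ ⟨hγτ, hγC₀⟩
  have hAsmall := fun x (hx : x < γ) => mk_inter_Iio_lt_cof_of_otype_eq hAunb hAotype hx
  obtain ⟨N, hN⟩ := hσs_cofinal _ (cof_lt_of_lt_ord_succ (hcof ▸ hσ)
    (one_lt_cof_iff.1 (one_lt_aleph0.trans hγ)) hγτ)
  refine goodPoint_of_forall_exists_dominating hγ hAγ hAunb hAsmall
    (fun α β hαβ hβ => hinc α β hαβ (hβ.trans hγτ)) fun ξ hξ => ?_
  obtain ⟨α, hαγ, hα⟩ := hAcode ξ hξ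
  refine ⟨H α, hHγ α hαγ, max (M α) N, fun n hn ζ hζ => hM α n (le_of_max_le_left hn) ?_ ζ
    ⟨hα ▸ hζ, (hAγ hζ.1).trans hγτ⟩⟩
  calc #↑(a α ∩ Iio (succ σ).ord) ≤ #↑(A ∩ Iio ξ) := hα ▸ mk_le_mk_of_subset inter_subset_left
    _ < Cardinal.lift.{1} γ.cof := hAsmall ξ hξ
    _ < Cardinal.lift.{1} (σs n) :=
      Cardinal.lift_lt.2 (hN.trans_le (hσs.monotone (le_of_max_le_right hn)))
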